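/- arXiv:1403.3031 — 6 statements merged into one kernel-verified Lean document; each statement's English description precedes it below -/
import Mathlib

section
/- Let p = {p_k : k ≥ 1} be a probability distribution on a countable index set and define ζ_{1,v} = Σ_{k≥1} p_k (1-p_k)^v for v ≥ 0. If Shannon's entropy H = -Σ_{k≥1} p_k ln(p_k) is finite, then H = Σ_{v=1}^∞ (1/v) ζ_{1,v}. -/
/-! Since `0 ≤ p k ≤ 1`, the Mercator series `-log x = ∑_{v ≥ 1} (1 - x)^v / v` expands each term
`-p k log (p k)` as `∑_{v ≥ 1} p k (1 - p k)^v / v`. All terms are nonnegative, so the double series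
may be summed in the other order, which gives `∑_v ζ_{1,v} / v`. -/

open Real

theorem Real.hasSum_inv_succ_mul_mul_one_sub_pow {x : ℝ} (h0 : 0 ≤ x) (h2 : x < 2) :
    HasSum (fun v : ℕ => 1 / (v + 1 : ℝ) * (x * (1 - x) ^ (v + 1))) (-(x * log x)) := by
  rcases h0.eq_or_lt with rfl | hpos
  · simp
  · have hx : |1 - x| < 1 := abs_lt.2 ⟨by linarith, by linarith⟩
    have hlog := (hasSum_pow_div_log_of_abs_lt_one hx).mul_left x
    rw [sub_sub_cancel] at hlog
    have hterm (v : ℕ) :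
        x * ((1 - x) ^ (v + 1) / (v + 1)) = 1 / (v + 1 : ℝ) * (x * (1 - x) ^ (v + 1)) := by ring
    simpa only [hterm, neg_mul_eq_mul_neg] using hlog

theorem tsum_tsum_comm_of_nonneg_of_hasSum {α β : Type*} {F : α → β → ℝ}
    (hF : ∀ a b, 0 ≤ F a b) {g : α → ℝ} (hg : ∀ a, HasSum (F a) (g a)) (hs : Summable g) :
    ∑' b, ∑' a, F a b = ∑' a, g a := by
  have hrows : (fun a => ∑' b, F a b) = g := funext fun a => (hg a).tsum_eq
  have hprod : Summable (Function.uncurry F) :=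
    (summable_prod_of_nonneg fun q => hF q.1 q.2).2 ⟨fun a => (hg a).summable, hrows ▸ hs⟩
  rw [← hrows]
  exact hprod.tsum_comm

/-- If Shannon's entropy `H = -∑_k p_k ln p_k` is finite, then
`H = ∑_{v=1}^∞ (1/v) ζ_{1,v}` where `ζ_{1,v} = ∑_k p_k (1-p_k)^v`. -/
theorem shannon_entropy_entropic_basis_representation
    (p : ℕ → ℝ) (hp : ∀ k, 0 ≤ p k) (hps : HasSum p 1)
    (hH : Summable fun k => p k * Real.log (p k)) :
    -∑' k, p k * Real.log (p k) =
      ∑' v : ℕ, (1 / (v + 1 : ℝ)) * ∑' k, p k * (1 - p k) ^ (v + 1) := by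
  have hle : ∀ k, p k ≤ 1 := fun k => le_hasSum hps k fun j _ => hp j
  have hnonneg : ∀ k (v : ℕ), 0 ≤ 1 / (v + 1 : ℝ) * (p k * (1 - p k) ^ (v + 1)) := fun k v =>
    mul_nonneg (by positivity) (mul_nonneg (hp k) (pow_nonneg (sub_nonneg.2 (hle k)) _))
  have hseries := fun k => hasSum_inv_succ_mul_mul_one_sub_pow (hp k) ((hle k).trans_lt one_lt_two)
  rw [← tsum_neg, ← tsum_tsum_comm_of_nonneg_of_hasSum hnonneg hseries hH.neg]
  exact tsum_congr fun v => tsum_mul_left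
end

section
/- Let p = {p_k : 1 ≤ k ≤ K} be a probability distribution with finitely many strictly positive masses p_k > 0, and define ζ_{1,v} = Σ_{k=1}^K p_k (1-p_k)^v for v ≥ 0. Then for every r > 0 with r ≠ 1, Rényi's equivalent entropy h_r = Σ_{k=1}^K p_k^r satisfies h_r = ζ_{1,0} + Σ_{v=1}^∞ (Π_{i=1}^v ((i-r)/i)) ζ_{1,v}, where the series converges. -/
/-!
Since `p_k ^ r = p_k * (1 - y) ^ (r - 1)` with `y = 1 - p_k ∈ [0, 1)`, the binomial series
`(1 - y) ^ (r - 1) = ∑ₙ choose (n - r) n * y ^ n`, whose coefficients are the products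
`∏_{i=1}^n (i - r) / i`, expands each `p_k ^ r`; summing over `k` gives
`h_r = ∑_{v ≥ 0} (∏_{i=1}^v (i - r) / i) ζ_{1,v}`, and the `v = 0` term is `ζ_{1,0}`.
-/

open Finset

theorem Finset.prod_Icc_one_eq_prod_range {M : Type*} [CommMonoid M] (f : ℕ → M) (n : ℕ) :
    ∏ i ∈ Icc 1 n, f i = ∏ j ∈ range n, f (j + 1) := by
  rw [← Ico_add_one_right_eq_Icc, prod_Ico_eq_prod_range, Nat.add_sub_cancel]
  simp only [add_comm 1]

theorem Ring.choose_natCast_sub_self {K : Type*} [Field K] [CharZero K] (r : K) (n : ℕ) :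
    Ring.choose ((n : K) - r) n = ∏ i ∈ Icc 1 n, ((i : K) - r) / i := by
  have hreflect :
      ∏ j ∈ range n, ((n : K) - r - j) = ∏ j ∈ range n, (((j + 1 : ℕ) : K) - r) := by
    rw [← prod_range_reflect (fun j : ℕ => (((j + 1 : ℕ) : K) - r))]
    refine prod_congr rfl fun j hj => ?_
    have hjn : j < n := mem_range.mp hj
    rw [Nat.cast_add_one, Nat.cast_sub (by omega), Nat.cast_sub (by omega)]
    ring
  rw [Ring.choose_eq_smul, ← Polynomial.aeval_eq_smeval, ← Polynomial.eval_map_algebraMap,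
    descPochhammer_map, descPochhammer_eval_eq_prod_range, smul_eq_mul, prod_div_distrib,
    hreflect, prod_Icc_one_eq_prod_range, prod_Icc_one_eq_prod_range,
    Nat.factorial_eq_prod_range_add_one, Nat.cast_prod, div_eq_inv_mul]

theorem Real.hasSum_prod_mul_pow_one_sub_rpow (r : ℝ) {y : ℝ} (hy : |y| < 1) :
    HasSum (fun n : ℕ => (∏ i ∈ Icc 1 n, ((i : ℝ) - r) / i) * y ^ n) ((1 - y) ^ (r - 1)) := by
  have h := (one_div_one_sub_rpow_hasFPowerSeriesOnBall_zero (1 - r)).hasSum (y := y)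
    (by simpa [enorm_eq_nnnorm, ← NNReal.coe_lt_one] using hy)
  have hy' : 0 ≤ 1 - y := by linarith [le_abs_self y]
  rw [FormalMultilinearSeries.ofScalars_apply_eq', zero_add, one_div, ← rpow_neg hy', neg_sub]
    at h
  have hcoeff : ∀ n : ℕ, Ring.choose (1 - r + n - 1) n = ∏ i ∈ Icc 1 n, ((i : ℝ) - r) / i :=
    fun n => by rw [← Ring.choose_natCast_sub_self]; ring_nf
  simpa only [hcoeff, smul_eq_mul] using h

theorem Real.hasSum_prod_mul_mul_one_sub_pow (r : ℝ) {x : ℝ} (hx₀ : 0 < x) (hx₂ : x < 2) :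
    HasSum (fun n : ℕ => (∏ i ∈ Icc 1 n, ((i : ℝ) - r) / i) * (x * (1 - x) ^ n)) (x ^ r) := by
  have h := (hasSum_prod_mul_pow_one_sub_rpow r (y := 1 - x)
    (abs_lt.mpr ⟨by linarith, by linarith⟩)).mul_left x
  rw [sub_sub_cancel, rpow_sub_one hx₀.ne', mul_div_cancel₀ _ hx₀.ne'] at h
  simpa only [mul_left_comm x] using h

theorem renyi_equivalent_entropy_entropic_basis_representation_general
    (K : ℕ) (p : Fin K → ℝ) (hp : ∀ k, 0 < p k) (hps : ∑ k, p k = 1)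
    (r : ℝ) :
    HasSum
      (fun v : ℕ =>
        (∏ i ∈ Finset.Icc 1 (v + 1), (((i : ℝ) - r) / i)) *
          ∑ k, p k * (1 - p k) ^ (v + 1))
      ((∑ k, p k ^ r) - ∑ k, p k * (1 - p k) ^ (0 : ℕ)) := by
  have hp_le_one : ∀ k, p k ≤ 1 := fun k =>
    hps ▸ single_le_sum (fun i _ => (hp i).le) (mem_univ k)
  have h := hasSum_sum fun k (_ : k ∈ univ) =>
    Real.hasSum_prod_mul_mul_one_sub_pow r (hp k) (by linarith [hp_le_one k])
  simp only [← mul_sum] at h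
  simpa using (hasSum_nat_add_iff' 1).mpr h

/-- For a probability distribution with finitely many strictly positive
masses, Rényi's equivalent entropy `h_r = ∑_k p_k^r` (`r > 0`, `r ≠ 1`) satisfies
`h_r = ζ_{1,0} + ∑_{v=1}^∞ (∏_{i=1}^v ((i-r)/i)) ζ_{1,v}`, the series converging. -/
theorem renyi_equivalent_entropy_entropic_basis_representation
    (K : ℕ) (p : Fin K → ℝ) (hp : ∀ k, 0 < p k) (hps : ∑ k, p k = 1)
    (r : ℝ) (hr : 0 < r) (hr1 : r ≠ 1) :
    HasSum
      (fun v : ℕ =>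
        (∏ i ∈ Finset.Icc 1 (v + 1), (((i : ℝ) - r) / i)) *
          ∑ k, p k * (1 - p k) ^ (v + 1))
      ((∑ k, p k ^ r) - ∑ k, p k * (1 - p k) ^ (0 : ℕ)) :=
  renyi_equivalent_entropy_entropic_basis_representation_general K p hp hps r
end

section
/- Let p = {p_k : k ≥ 1} be a probability distribution on a countable index set and define ζ_{1,v} = Σ_{k≥1} p_k (1-p_k)^v for v ≥ 0. Then Emlen's index D = Σ_{k≥1} p_k e^{-p_k} satisfies D = Σ_{v=0}^∞ (e^{-1}/v!) ζ_{1,v}. -/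
/-!
Expanding `e^{-p} = e^{-1} e^{1-p} = ∑_v e^{-1} (1-p)^v / v!` turns `D` into a double series
`∑_k ∑_v e^{-1} p_k (1-p_k)^v / v!` whose terms are nonnegative because `0 ≤ p_k ≤ 1`,
so by Tonelli the order of summation may be exchanged.
-/

open Real Nat

theorem hasSum_swap_of_nonneg {α β : Type*} {f : α → β → ℝ} {r : α → ℝ} {t : β → ℝ} {s : ℝ}
    (hf : ∀ a b, 0 ≤ f a b) (hrow : ∀ a, HasSum (f a) (r a)) (hr : HasSum r s)
    (hcol : ∀ b, HasSum (fun a => f a b) (t b)) : HasSum t s := by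
  have hsum : Summable (Function.uncurry f) := by
    refine (summable_prod_of_nonneg fun x => hf x.1 x.2).2 ⟨fun a => (hrow a).summable, ?_⟩
    simpa only [Function.uncurry_apply_pair, (hrow _).tsum_eq] using hr.summable
  have htot : ∑' x, Function.uncurry f x = s :=
    (hsum.hasSum.prod_fiberwise hrow).unique hr ▸ rfl
  have hswap : HasSum (fun x : β × α => f x.2 x.1) s :=
    htot ▸ (Equiv.prodComm β α).hasSum_iff.2 hsum.hasSum
  exact hswap.prod_fiberwise hcol

theorem Summable.mul_of_nonneg_of_le_one {ι : Type*} {p c : ι → ℝ} (hps : Summable p)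
    (hp : ∀ k, 0 ≤ p k) (hc₀ : ∀ k, 0 ≤ c k) (hc₁ : ∀ k, c k ≤ 1) :
    Summable fun k => p k * c k :=
  hps.of_nonneg_of_le (fun k => mul_nonneg (hp k) (hc₀ k))
    fun k => mul_le_of_le_one_right (hp k) (hc₁ k)

theorem hasSum_mul_one_sub_pow_div_factorial (x : ℝ) :
    HasSum (fun v : ℕ => exp (-1) / (v ! : ℝ) * (x * (1 - x) ^ v)) (x * exp (-x)) := by
  have h := (NormedSpace.expSeries_div_hasSum_exp (1 - x)).mul_left (exp (-1) * x)
  rw [← exp_eq_exp_ℝ, show exp (-1) * x * exp (1 - x) = x * exp (-x) by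
    rw [mul_right_comm, ← exp_add, mul_comm]; ring_nf] at h
  have hterm : (fun v : ℕ => exp (-1) / (v ! : ℝ) * (x * (1 - x) ^ v)) =
      fun v => exp (-1) * x * ((1 - x) ^ v / v !) := funext fun v => by ring
  exact hterm ▸ h

/-- Emlen's index `D = ∑_k p_k e^{-p_k}` satisfies
`D = ∑_{v=0}^∞ (e^{-1}/v!) ζ_{1,v}` where `ζ_{1,v} = ∑_k p_k (1-p_k)^v`. -/
theorem emlen_index_entropic_basis_representation
    (p : ℕ → ℝ) (hp : ∀ k, 0 ≤ p k) (hps : HasSum p 1) :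
    HasSum
      (fun v : ℕ => (Real.exp (-1) / (v.factorial : ℝ)) * ∑' k, p k * (1 - p k) ^ v)
      (∑' k, p k * Real.exp (-(p k))) := by
  have hle : ∀ k, p k ≤ 1 := fun k => le_hasSum hps k fun j _ => hp j
  have hq : ∀ k, 0 ≤ 1 - p k := fun k => sub_nonneg.2 (hle k)
  refine hasSum_swap_of_nonneg (f := fun k v => exp (-1) / (v ! : ℝ) * (p k * (1 - p k) ^ v))
    (fun k v => by have := hq k; have := hp k; positivity)
    (fun k => hasSum_mul_one_sub_pow_div_factorial (p k)) ?_ fun v => ?_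
  · refine (hps.summable.mul_of_nonneg_of_le_one hp (fun k => (exp_pos _).le) fun k => ?_).hasSum
    exact exp_le_one_iff.2 (neg_nonpos.2 (hp k))
  · refine (hps.summable.mul_of_nonneg_of_le_one hp (fun k => pow_nonneg (hq k) v)
      fun k => pow_le_one₀ (hq k) (sub_le_self _ (hp k))).hasSum.mul_left _
end

section
/- Let X_1, ..., X_n be i.i.d. samples from a countable alphabet 𝒳 = {ℓ_k} according to a probability distribution p = {p_k}, let x_k = Σ_{i=1}^n 1[X_i = ℓ_k] and p̂_k = x_k/n. Then for every integer v with 1 ≤ v ≤ n-1, the statistic Σ_{k≥1} p̂_k Π_{j=1}^v (1 - (x_k - 1)/(n - j)) is an unbiased estimator of ζ_{1,v} = Σ_{k≥1} p_k (1-p_k)^v, i.e., its expectation equals ζ_{1,v}. -/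
/-!
The count `x_k` of each symbol is binomial with parameters `n` and `p_k`, and the `k`-th summand
of the statistic is `zetaHatTerm n v x_k = (x_k / n) C(n - x_k, v) / C(n - 1, v)`. The absorption
identity `m C(n, m) = n C(n - 1, m - 1)` and `C(a, b) C(a - b, c) = C(a, c) C(a - c, b)` give
`C(n, m) · zetaHatTerm n v m = C(n - 1 - v, m - 1)`, so its binomial expectation collapses, by the
binomial theorem for `(p_k + (1 - p_k))^(n - 1 - v)`, to `p_k (1 - p_k)^v`. The summands are
nonnegative with expectations at most `p_k`, so the expectation may be taken term by term.
-/

open MeasureTheory ProbabilityTheory Finset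
open scoped Nat

theorem Nat.choose_mul_choose_sub_comm (a b c : ℕ) :
    a.choose b * (a - b).choose c = a.choose c * (a - c).choose b := by
  have hb := Nat.choose_mul (n := a) (Nat.le_add_right b c)
  have hc := Nat.choose_mul (n := a) (Nat.le_add_left c b)
  rw [Nat.add_sub_cancel_left, Nat.choose_symm_add] at hb
  rw [Nat.add_sub_cancel] at hc
  rw [← hb, ← hc]

noncomputable def zetaHatTerm (n v m : ℕ) : ℝ :=
  (m : ℝ) / n * ∏ j ∈ Icc 1 v, (1 - ((m : ℝ) - 1) / ((n : ℝ) - (j : ℝ)))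

theorem Nat.cast_choose_eq_prod_range_div {K : Type*} [Field K] [CharZero K] (a b : ℕ) :
    (a.choose b : K) = (∏ j ∈ range b, ((a : K) - j)) / b ! := by
  rw [Nat.cast_choose_eq_descPochhammer_div, descPochhammer_eval_eq_prod_range]

theorem prod_one_sub_div_eq_choose_div {n v m : ℕ} (hmn : m ≤ n) (hvn : v < n) :
    ∏ j ∈ Icc 1 v, (1 - ((m : ℝ) - 1) / ((n : ℝ) - (j : ℝ))) =
      ((n - m).choose v : ℝ) / (n - 1).choose v := by
  rw [Nat.cast_choose_eq_prod_range_div, Nat.cast_choose_eq_prod_range_div,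
    div_div_div_cancel_right₀ (by positivity), ← prod_div_distrib,
    ← Ico_add_one_right_eq_Icc, prod_Ico_eq_prod_range, Nat.add_sub_cancel]
  refine prod_congr rfl fun i hi => ?_
  have hi : (i : ℝ) + 1 < n := by exact_mod_cast (by simp at hi; omega : i + 1 < n)
  rw [Nat.cast_sub hmn, Nat.cast_sub (by omega : 1 ≤ n)]
  push_cast
  field_simp [show (n : ℝ) - 1 - i ≠ 0 by linarith, show (n : ℝ) - (1 + i) ≠ 0 by linarith]
  ring

theorem zetaHatTerm_eq_choose_div {n v m : ℕ} (hmn : m ≤ n) (hvn : v < n) :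
    zetaHatTerm n v m = m / n * (((n - m).choose v : ℝ) / (n - 1).choose v) := by
  rw [zetaHatTerm, prod_one_sub_div_eq_choose_div hmn hvn]

theorem zetaHatTerm_nonneg {n v m : ℕ} (hmn : m ≤ n) (hvn : v < n) : 0 ≤ zetaHatTerm n v m := by
  rw [zetaHatTerm_eq_choose_div hmn hvn]
  positivity

theorem choose_mul_zetaHatTerm {N v t : ℕ} (ht : t ≤ N) (hv : v ≤ N) :
    ((N + 1).choose (t + 1) : ℝ) * zetaHatTerm (N + 1) v (t + 1) = (N - v).choose t := by
  have habsorb : ((N + 1).choose (t + 1) : ℝ) * (t + 1) = (N + 1) * N.choose t := by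
    exact_mod_cast (Nat.add_one_mul_choose_eq N t).symm
  have hcomm : (N.choose t : ℝ) * (N - t).choose v = N.choose v * (N - v).choose t := by
    exact_mod_cast Nat.choose_mul_choose_sub_comm N t v
  have hv0 : (N.choose v : ℝ) ≠ 0 := by exact_mod_cast (Nat.choose_pos hv).ne'
  rw [zetaHatTerm_eq_choose_div (by omega) (by omega), Nat.add_sub_add_right, Nat.add_sub_cancel]
  push_cast
  field_simp
  linear_combination ((N - t).choose v : ℝ) * habsorb + (N + 1 : ℝ) * hcomm

theorem sum_binomial_mul_zetaHatTerm {n v : ℕ} (hvn : v < n) (r : ℝ) :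
    ∑ m ∈ range (n + 1), (n.choose m : ℝ) * r ^ m * (1 - r) ^ (n - m) * zetaHatTerm n v m =
      r * (1 - r) ^ v := by
  obtain ⟨N, rfl⟩ : ∃ N, n = N + 1 := ⟨n - 1, by omega⟩
  have hv : v ≤ N := by omega
  have hterm : ∀ t ∈ range (N + 1),
      ((N + 1).choose (t + 1) : ℝ) * r ^ (t + 1) * (1 - r) ^ (N + 1 - (t + 1)) *
        zetaHatTerm (N + 1) v (t + 1) =
        r * (1 - r) ^ v * (r ^ t * (1 - r) ^ (N - v - t) * (N - v).choose t) := by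
    intro t ht
    have h := choose_mul_zetaHatTerm (by simpa [Nat.lt_succ_iff] using ht) hv
    rw [Nat.add_sub_add_right]
    rcases le_or_gt t (N - v) with htv | htv
    · rw [show N - t = v + (N - v - t) by omega]
      linear_combination (r ^ (t + 1) * (1 - r) ^ (v + (N - v - t))) * h
    · rw [Nat.choose_eq_zero_of_lt htv] at h ⊢
      linear_combination (r ^ (t + 1) * (1 - r) ^ (N - t)) * h
  have hsub : range (N - v + 1) ⊆ range (N + 1) := range_subset_range.2 (by omega)
  rw [sum_range_succ', sum_congr rfl hterm, ← mul_sum, ← sum_subset hsub, ← add_pow]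
  · simp [zetaHatTerm]
  · intro t _ ht
    rw [Nat.choose_eq_zero_of_lt (by simpa using ht)]
    simp

section FiniteValued

variable {Ω β : Type*} [Fintype β]

theorem comp_eq_sum_indicator_preimage (F : Ω → β) (h : β → ℝ) (ω : Ω) :
    h (F ω) = ∑ b, (F ⁻¹' {b}).indicator (fun _ => h b) ω := by
  classical
  simp [Set.indicator_apply]

variable [MeasurableSpace Ω] {μ : Measure Ω} [IsFiniteMeasure μ] {F : Ω → β}

theorem integrable_comp_of_measurableSet_preimage (hF : ∀ b, MeasurableSet (F ⁻¹' {b}))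
    (h : β → ℝ) : Integrable (fun ω => h (F ω)) μ := by
  simp_rw [comp_eq_sum_indicator_preimage F h]
  exact integrable_finsetSum _ fun b _ => (integrable_const (h b)).indicator (hF b)

theorem integral_comp_eq_sum_measureReal_preimage (hF : ∀ b, MeasurableSet (F ⁻¹' {b}))
    (h : β → ℝ) : ∫ ω, h (F ω) ∂μ = ∑ b, μ.real (F ⁻¹' {b}) * h b := by
  simp_rw [comp_eq_sum_indicator_preimage F h]
  rw [integral_finsetSum _ fun b _ => (integrable_const (h b)).indicator (hF b)]
  simp_rw [integral_indicator_const _ (hF _), smul_eq_mul]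

end FiniteValued

section Binomial

variable {Ω ι α : Type*} [Fintype ι] [DecidableEq ι] {X : ι → Ω → α} {S : Set α}
  [DecidablePred (· ∈ S)]

theorem preimage_filter_mem_eq_iInter (s : Finset ι) :
    (fun ω => univ.filter fun i => X i ω ∈ S) ⁻¹' {s} =
      ⋂ i, X i ⁻¹' (if i ∈ s then S else Sᶜ) := by
  ext ω
  simp only [Set.mem_preimage, Set.mem_singleton_iff, Finset.ext_iff, mem_filter, mem_univ,
    true_and, Set.mem_iInter]
  refine forall_congr' fun i => ?_
  split_ifs with hi <;> simp [hi]

variable [MeasurableSpace Ω] [MeasurableSpace α] {μ : Measure Ω}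

theorem measurableSet_preimage_filter_mem (hX : ∀ i, Measurable (X i)) (hS : MeasurableSet S)
    (s : Finset ι) : MeasurableSet ((fun ω => univ.filter fun i => X i ω ∈ S) ⁻¹' {s}) := by
  rw [preimage_filter_mem_eq_iInter]
  exact .iInter fun i => hX i (by split_ifs <;> simp [hS])

variable [IsProbabilityMeasure μ]

theorem measureReal_preimage_filter_mem (hind : iIndepFun X μ) (hX : ∀ i, Measurable (X i))
    (hS : MeasurableSet S) {r : ℝ} (hr : ∀ i, μ.real (X i ⁻¹' S) = r) (s : Finset ι) :
    μ.real ((fun ω => univ.filter fun i => X i ω ∈ S) ⁻¹' {s}) =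
      r ^ #s * (1 - r) ^ (Fintype.card ι - #s) := by
  have hfactor : ∀ i, μ.real (X i ⁻¹' (if i ∈ s then S else Sᶜ)) =
      if i ∈ s then r else 1 - r := by
    intro i
    split_ifs
    · exact hr i
    · rw [Set.preimage_compl, probReal_compl_eq_one_sub (hX i hS), hr i]
  rw [preimage_filter_mem_eq_iInter, measureReal_def,
    hind.meas_iInter fun i => ⟨_, by split_ifs <;> simp [hS], rfl⟩, ENNReal.toReal_prod]
  simp_rw [← measureReal_def, hfactor]
  rw [prod_ite, prod_const, prod_const, filter_mem_eq_inter, univ_inter, filter_not,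
    filter_mem_eq_inter, univ_inter, card_sdiff_of_subset (subset_univ s), card_univ]

theorem integral_comp_card_filter_mem (hind : iIndepFun X μ) (hX : ∀ i, Measurable (X i))
    (hS : MeasurableSet S) {r : ℝ} (hr : ∀ i, μ.real (X i ⁻¹' S) = r) (g : ℕ → ℝ) :
    ∫ ω, g #(univ.filter fun i => X i ω ∈ S) ∂μ =
      ∑ m ∈ range (Fintype.card ι + 1),
        ((Fintype.card ι).choose m : ℝ) * r ^ m * (1 - r) ^ (Fintype.card ι - m) * g m := by
  rw [integral_comp_eq_sum_measureReal_preimage (measurableSet_preimage_filter_mem hX hS)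
    fun s => g #s]
  simp_rw [measureReal_preimage_filter_mem hind hX hS hr]
  rw [← powerset_univ,
    sum_powerset_apply_card fun m => r ^ m * (1 - r) ^ (Fintype.card ι - m) * g m, card_univ]
  simp_rw [nsmul_eq_mul, mul_assoc]

end Binomial

/-- given i.i.d. samples `X_1,…,X_n` from a countable alphabet with
distribution `p`, counts `x_k = ∑_i 1[X_i = ℓ_k]` and `p̂_k = x_k / n`, the statistic
`∑_k p̂_k ∏_{j=1}^v (1 - (x_k-1)/(n-j))` is an unbiased estimator of
`ζ_{1,v} = ∑_k p_k (1-p_k)^v` for every `1 ≤ v ≤ n-1`. -/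
theorem zhang_zhou_estimator_unbiased
    {Ω : Type*} [MeasurableSpace Ω] (μ : Measure Ω) [IsProbabilityMeasure μ]
    (p : ℕ → ℝ) (hp : ∀ k, 0 ≤ p k) (hps : HasSum p 1)
    (n : ℕ) (X : Fin n → Ω → ℕ) (hX : ∀ i, Measurable (X i))
    (hind : iIndepFun X μ)
    (hdist : ∀ i k, μ (X i ⁻¹' {k}) = ENNReal.ofReal (p k))
    (v : ℕ) (hv1 : 1 ≤ v) (hvn : v ≤ n - 1) :
    ∫ ω,
        (∑' k : ℕ,
          ((∑ i, if X i ω = k then 1 else 0 : ℕ) : ℝ) / n *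
            ∏ j ∈ Finset.Icc 1 v,
              (1 - (((∑ i, if X i ω = k then 1 else 0 : ℕ) : ℝ) - 1) /
                ((n : ℝ) - (j : ℝ)))) ∂μ
      = ∑' k, p k * (1 - p k) ^ v := by
  have hvn : v < n := by omega
  have hp1 : ∀ k, p k ≤ 1 := fun k => le_hasSum hps k fun j _ => hp j
  have hr : ∀ k i, μ.real (X i ⁻¹' {k}) = p k := fun k i => by
    rw [measureReal_def, hdist, ENNReal.toReal_ofReal (hp k)]
  set F : ℕ → Ω → ℝ := fun k ω => zetaHatTerm n v #(univ.filter fun i => X i ω ∈ ({k} : Set ℕ))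
  have hF_int : ∀ k, Integrable (F k) μ := fun k =>
    integrable_comp_of_measurableSet_preimage
      (measurableSet_preimage_filter_mem hX (measurableSet_singleton k))
      fun s => zetaHatTerm n v #s
  have hF_integral : ∀ k, ∫ ω, F k ω ∂μ = p k * (1 - p k) ^ v := fun k => by
    rw [integral_comp_card_filter_mem hind hX (measurableSet_singleton k) (hr k),
      Fintype.card_fin, sum_binomial_mul_zetaHatTerm hvn]
  have hF_nonneg : ∀ k ω, 0 ≤ F k ω := fun k ω =>
    zetaHatTerm_nonneg ((card_le_univ _).trans_eq (Fintype.card_fin n)) hvn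
  have hF_summable : Summable fun k => ∫ ω, ‖F k ω‖ ∂μ := by
    simp_rw [Real.norm_of_nonneg (hF_nonneg _ _), hF_integral]
    refine hps.summable.of_nonneg_of_le (fun k => ?_) (fun k => ?_)
    · exact mul_nonneg (hp k) (pow_nonneg (sub_nonneg.2 (hp1 k)) v)
    · exact mul_le_of_le_one_right (hp k) (pow_le_one₀ (sub_nonneg.2 (hp1 k)) (by linarith [hp k]))
  have hcount : ∀ k ω, (∑ i, if X i ω = k then 1 else 0 : ℕ) =
      #(univ.filter fun i => X i ω ∈ ({k} : Set ℕ)) := fun k ω => by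
    simp only [card_filter, Set.mem_singleton_iff]
  calc _ = ∫ ω, ∑' k, F k ω ∂μ := by simp only [F, zetaHatTerm, hcount]
    _ = ∑' k, ∫ ω, F k ω ∂μ := (integral_tsum_of_summable_integral_norm hF_int hF_summable).symm
    _ = _ := tsum_congr hF_integral
end

section
/- Let {w_v : v ≥ 1} be real weights with |w_v| ≤ M for all v. For p ∈ [0,1] and n ∈ ℕ define g_n(p) = p Σ_{v=1}^{⌊n(1-p)+1⌋} w_v Π_{j=1}^v (1 - (np - 1)/(n - j)) and g(p) = p Σ_{v=1}^∞ w_v (1-p)^v. Then for any 0 < c < d < 1, lim_{n→∞} sup_{p ∈ [c,d]} √n |g_n(p) - g(p)| = 0. -/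
open Filter Topology

/-- `g_n(p) = p ∑_{v=1}^{⌊n(1-p)+1⌋} w_v ∏_{j=1}^v (1 - (np-1)/(n-j))`. -/
noncomputable def gEst (w : ℕ → ℝ) (n : ℕ) (p : ℝ) : ℝ :=
  p * ∑ v ∈ Finset.Icc 1 ⌊(n : ℝ) * (1 - p) + 1⌋₊,
    w v * ∏ j ∈ Finset.Icc 1 v, (1 - ((n : ℝ) * p - 1) / ((n : ℝ) - (j : ℝ)))

/-- `g(p) = p ∑_{v=1}^∞ w_v (1-p)^v`. -/
noncomputable def gLim (w : ℕ → ℝ) (p : ℝ) : ℝ :=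
  p * ∑' v : ℕ, w (v + 1) * (1 - p) ^ (v + 1)

/-!
Write `q = 1 - p` and `N = ⌊nq + 1⌋`. The `j`-th factor of `g_n(p)` equals
`q + (1 - pj)/(n - j)`. For `j ≤ N` the denominator is at least `np - 1`, so once `np² ≥ 4`
every factor lies in `[0, 1 - p/2]` and is within `2(j+1)/(np)` of `q`. Telescoping, the
`v`-th product differs from `q^v` by `O(v² (1 - p/2)^v / n)`, and these errors sum to
`O(1/(np⁴))`. The part of `g(p)` beyond `v = N` is at most `M q^(N+1) / p`, exponentially
small in `n` since `N + 1 > nq`. Both bounds are uniform for `p ∈ [c, d]`, and `√n` times them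
tends to `0`.
-/

open Finset

theorem abs_prod_sub_prod_le {ι : Type*} (t : Finset ι) {a b : ι → ℝ} {s δ : ℝ}
    (ha : ∀ i ∈ t, |a i| ≤ s) (hb : ∀ i ∈ t, |b i| ≤ s)
    (hab : ∀ i ∈ t, |a i - b i| ≤ δ) :
    |∏ i ∈ t, a i - ∏ i ∈ t, b i| ≤ #t * s ^ (#t - 1) * δ := by
  classical
  induction t using Finset.induction_on with
  | empty => simp
  | insert i t hi ih =>
    simp only [forall_mem_insert] at ha hb hab
    have hs : 0 ≤ s := (abs_nonneg _).trans ha.1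
    have hδ : 0 ≤ δ := (abs_nonneg _).trans hab.1
    have hbt : |∏ j ∈ t, b j| ≤ s ^ #t := by
      rw [abs_prod]
      exact (prod_le_prod (fun j _ => abs_nonneg _) hb.2).trans_eq (prod_const s)
    have hpow : s * (#t * s ^ (#t - 1)) = #t * s ^ #t := by
      cases #t with
      | zero => simp
      | succ m => rw [Nat.add_sub_cancel, pow_succ]; push_cast; ring
    rw [prod_insert hi, prod_insert hi, card_insert_of_notMem hi, Nat.add_sub_cancel]
    calc |a i * ∏ j ∈ t, a j - b i * ∏ j ∈ t, b j|
        = |a i * (∏ j ∈ t, a j - ∏ j ∈ t, b j) + (a i - b i) * ∏ j ∈ t, b j| := by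
          ring_nf
      _ ≤ s * (#t * s ^ (#t - 1) * δ) + δ * s ^ #t := by
        grw [abs_add_le, abs_mul, abs_mul, ha.1, ih ha.2 hb.2 hab.2, hab.1, hbt]
      _ = (#t + 1 : ℕ) * s ^ #t * δ := by push_cast; linear_combination δ * hpow

noncomputable def estFactor (n : ℕ) (p : ℝ) (j : ℕ) : ℝ :=
  1 - ((n : ℝ) * p - 1) / ((n : ℝ) - j)

section estFactor

variable {n j : ℕ} {p : ℝ}

theorem estFactor_sub_one_sub (h : (n : ℝ) - j ≠ 0) :
    estFactor n p j - (1 - p) = (1 - p * j) / (n - j) := by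
  unfold estFactor
  field_simp
  ring

theorem estFactor_nonneg (hj : (j : ℝ) ≤ n * (1 - p) + 1) (hnp : 1 < n * p) :
    0 ≤ estFactor n p j := by
  have hpos : 0 < (n : ℝ) - j := by linarith
  rw [estFactor, sub_nonneg, div_le_one hpos]
  linarith

theorem estFactor_le (hp : 0 ≤ p) (hj : (j : ℝ) ≤ n * (1 - p) + 1) (hnp : 2 ≤ n * p) :
    estFactor n p j ≤ 1 - p + 2 / (n * p) := by
  have hgap : n * p / 2 ≤ (n : ℝ) - j := by linarith
  have hpos : 0 < (n : ℝ) - j := by linarith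
  have hpj : 0 ≤ p * j := by positivity
  have := estFactor_sub_one_sub (p := p) hpos.ne'
  calc estFactor n p j = 1 - p + (1 - p * j) / (n - j) := by linarith
    _ ≤ 1 - p + 1 / (n * p / 2) := by gcongr; linarith
    _ = 1 - p + 2 / (n * p) := by rw [one_div_div]

theorem abs_estFactor_sub_le (hp0 : 0 ≤ p) (hp1 : p ≤ 1) (hj : (j : ℝ) ≤ n * (1 - p) + 1)
    (hnp : 2 ≤ n * p) : |estFactor n p j - (1 - p)| ≤ 2 * (j + 1) / (n * p) := by
  have hgap : n * p / 2 ≤ (n : ℝ) - j := by linarith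
  have hpos : 0 < (n : ℝ) - j := by linarith
  have hpj : |1 - p * j| ≤ j + 1 := by
    rw [abs_le]; constructor <;> nlinarith [(Nat.cast_nonneg j : (0 : ℝ) ≤ j)]
  rw [estFactor_sub_one_sub hpos.ne', abs_div, abs_of_pos hpos]
  calc |1 - p * j| / (n - j) ≤ (j + 1) / (n * p / 2) := by gcongr
    _ = 2 * (j + 1) / (n * p) := by field_simp

end estFactor

section bounds

variable {n : ℕ} {p : ℝ}

theorem abs_prod_estFactor_sub_pow_le (hp0 : 0 < p) (hp1 : p ≤ 1) (hn : 4 ≤ n * p ^ 2) {k : ℕ}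
    (hk : k < ⌊(n : ℝ) * (1 - p) + 1⌋₊) :
    |∏ j ∈ Icc 1 (k + 1), estFactor n p j - (1 - p) ^ (k + 1)|
      ≤ (k + 1) * (1 - p / 2) ^ k * (2 * (k + 2) / (n * p)) := by
  have hnp : 2 ≤ n * p := by nlinarith
  have hsmall : 2 / (n * p) ≤ p / 2 := by
    rw [div_le_div_iff₀ (by linarith) two_pos]; nlinarith
  have hjN : ∀ j ∈ Icc 1 (k + 1), (j : ℝ) ≤ n * (1 - p) + 1 := fun j hj =>
    (Nat.cast_le.2 ((mem_Icc.1 hj).2.trans hk)).trans (Nat.floor_le (by nlinarith))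
  have hfac : ∀ j ∈ Icc 1 (k + 1), |estFactor n p j| ≤ 1 - p / 2 := fun j hj =>
    abs_le.2 ⟨by linarith [estFactor_nonneg (hjN j hj) (by linarith : 1 < n * p)],
      (estFactor_le hp0.le (hjN j hj) hnp).trans (by linarith)⟩
  have hdist : ∀ j ∈ Icc 1 (k + 1), |estFactor n p j - (1 - p)| ≤ 2 * (k + 2) / (n * p) := by
    intro j hj
    have hjk : (j : ℝ) ≤ k + 1 := by exact_mod_cast (mem_Icc.1 hj).2
    refine (abs_estFactor_sub_le hp0.le hp1 (hjN j hj) hnp).trans ?_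
    gcongr 2 * ?_ / _
    linarith
  simpa using abs_prod_sub_prod_le (Icc 1 (k + 1)) (b := fun _ => 1 - p) hfac
    (fun _ _ => abs_le.2 ⟨by linarith, by linarith⟩) hdist

theorem abs_sum_mul_prod_estFactor_sub_pow_le {w : ℕ → ℝ} {M : ℝ}
    (hw : ∀ v, 1 ≤ v → |w v| ≤ M) (hp0 : 0 < p) (hp1 : p ≤ 1) (hn : 4 ≤ n * p ^ 2) :
    |∑ k ∈ range ⌊(n : ℝ) * (1 - p) + 1⌋₊,
        w (k + 1) * (∏ j ∈ Icc 1 (k + 1), estFactor n p j - (1 - p) ^ (k + 1))|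
      ≤ 32 * M / (n * p ^ 4) := by
  have hM : 0 ≤ M := (abs_nonneg _).trans (hw 1 le_rfl)
  have hnp : 0 < n * p := by nlinarith
  have hgeom := hasSum_choose_mul_geometric_of_norm_lt_one 2
    (r := 1 - p / 2) (by rw [Real.norm_eq_abs, abs_lt]; constructor <;> linarith)
  calc _ ≤ ∑ k ∈ range ⌊(n : ℝ) * (1 - p) + 1⌋₊,
        M * ((k + 1) * (1 - p / 2) ^ k * (2 * (k + 2) / (n * p))) := by
        refine (abs_sum_le_sum_abs _ _).trans (sum_le_sum fun k hk => ?_)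
        rw [abs_mul]
        exact mul_le_mul (hw _ (by omega)) (abs_prod_estFactor_sub_pow_le hp0 hp1 hn
          (mem_range.1 hk)) (abs_nonneg _) hM
    _ = 4 * M / (n * p) * ∑ k ∈ range ⌊(n : ℝ) * (1 - p) + 1⌋₊,
          ((k + 2).choose 2 : ℝ) * (1 - p / 2) ^ k := by
        rw [mul_sum]
        refine sum_congr rfl fun k _ => ?_
        rw [Nat.cast_choose_two]
        push_cast
        field_simp
        ring
    _ ≤ 4 * M / (n * p) * (1 / (1 - (1 - p / 2)) ^ (2 + 1)) := by
        gcongr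
        exact sum_le_hasSum _
          (fun k _ => mul_nonneg (Nat.cast_nonneg _) (pow_nonneg (by linarith) k)) hgeom
    _ = 32 * M / (n * p ^ 4) := by field_simp; ring

end bounds

section series

variable {w : ℕ → ℝ} {M q : ℝ}

theorem summable_mul_pow_of_abs_le (hw : ∀ v, 1 ≤ v → |w v| ≤ M) (hq0 : 0 ≤ q)
    (hq1 : q < 1) : Summable fun k : ℕ => w (k + 1) * q ^ (k + 1) :=
  Summable.of_norm_bounded ((summable_geometric_of_lt_one hq0 hq1).mul_left (M * q)) fun k => by
    rw [norm_mul, norm_pow, Real.norm_eq_abs, Real.norm_eq_abs, abs_of_nonneg hq0, pow_succ']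
    exact (mul_le_mul_of_nonneg_right (hw (k + 1) (by omega)) (by positivity)).trans_eq
      (by ring)

theorem abs_tsum_mul_pow_add_le (hw : ∀ v, 1 ≤ v → |w v| ≤ M) (hq0 : 0 ≤ q) (hq1 : q < 1)
    (N : ℕ) : |∑' k : ℕ, w (k + N + 1) * q ^ (k + N + 1)| ≤ M * q ^ (N + 1) / (1 - q) := by
  rw [div_eq_mul_inv, ← Real.norm_eq_abs]
  refine tsum_of_norm_bounded ((hasSum_geometric_of_lt_one hq0 hq1).mul_left _) fun k => ?_
  rw [norm_mul, norm_pow, Real.norm_eq_abs, Real.norm_eq_abs, abs_of_nonneg hq0,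
    show k + N + 1 = N + 1 + k by omega, pow_add, ← mul_assoc]
  gcongr
  exact hw _ (by omega)

end series

theorem sum_Icc_one_eq_sum_range {M : Type*} [AddCommMonoid M] (f : ℕ → M) (N : ℕ) :
    ∑ v ∈ Icc 1 N, f v = ∑ k ∈ range N, f (k + 1) := by
  rw [← Ico_add_one_right_eq_Icc, range_eq_Ico, sum_Ico_add' f 0 N 1, zero_add]

section gEst_gLim

variable {w : ℕ → ℝ} {M : ℝ} {n : ℕ} {p : ℝ}

theorem gEst_eq_mul_sum_range :
    gEst w n p = p * ∑ k ∈ range ⌊(n : ℝ) * (1 - p) + 1⌋₊,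
      w (k + 1) * ∏ j ∈ Icc 1 (k + 1), estFactor n p j := by
  rw [gEst, sum_Icc_one_eq_sum_range]
  rfl

theorem gLim_eq_mul_sum_range_add_tsum (hw : ∀ v, 1 ≤ v → |w v| ≤ M) (hp0 : 0 < p)
    (hp1 : p ≤ 1) (N : ℕ) :
    gLim w p = p * (∑ k ∈ range N, w (k + 1) * (1 - p) ^ (k + 1)
      + ∑' k : ℕ, w (k + N + 1) * (1 - p) ^ (k + N + 1)) := by
  rw [gLim, (summable_mul_pow_of_abs_le hw (by linarith) (by linarith)).sum_add_tsum_nat_add N]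

theorem abs_gEst_sub_gLim_le (hw : ∀ v, 1 ≤ v → |w v| ≤ M) (hp0 : 0 < p) (hp1 : p ≤ 1)
    (hn : 4 ≤ n * p ^ 2) :
    |gEst w n p - gLim w p|
      ≤ 32 * M / (n * p ^ 3) + M * (1 - p) ^ (⌊(n : ℝ) * (1 - p) + 1⌋₊ + 1) := by
  set N := ⌊(n : ℝ) * (1 - p) + 1⌋₊
  have hhead := abs_sum_mul_prod_estFactor_sub_pow_le hw hp0 hp1 hn
  have htail := abs_tsum_mul_pow_add_le hw (q := 1 - p) (by linarith) (by linarith) N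
  rw [sub_sub_cancel] at htail
  have hsplit : gEst w n p - gLim w p = p * (∑ k ∈ range N,
      w (k + 1) * (∏ j ∈ Icc 1 (k + 1), estFactor n p j - (1 - p) ^ (k + 1))
      - ∑' k : ℕ, w (k + N + 1) * (1 - p) ^ (k + N + 1)) := by
    rw [gEst_eq_mul_sum_range, gLim_eq_mul_sum_range_add_tsum hw hp0 hp1 N]
    simp only [N, mul_sub, sum_sub_distrib]
    ring
  calc |gEst w n p - gLim w p| ≤ p * (32 * M / (n * p ^ 4) + M * (1 - p) ^ (N + 1) / p) := by
        rw [hsplit, abs_mul, abs_of_pos hp0]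
        gcongr
        exact (abs_sub _ _).trans (add_le_add hhead htail)
    _ = 32 * M / (n * p ^ 3) + M * (1 - p) ^ (N + 1) := by field_simp

end gEst_gLim

theorem pow_le_rpow_pow_of_mul_le {x t : ℝ} (hx0 : 0 < x) (hx1 : x ≤ 1) {m n : ℕ}
    (h : n * t ≤ m) : x ^ m ≤ (x ^ t) ^ n := by
  rw [← Real.rpow_natCast, ← Real.rpow_natCast, ← Real.rpow_mul hx0.le, mul_comm]
  exact Real.rpow_le_rpow_of_exponent_ge hx0 hx1 h

theorem tendsto_sqrt_mul_div_add_mul_pow (A B : ℝ) {ρ : ℝ} (hρ0 : 0 ≤ ρ) (hρ1 : ρ < 1) :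
    Tendsto (fun n : ℕ => √n * (A / n + B * ρ ^ n)) atTop (𝓝 0) := by
  have hdiv : Tendsto (fun n : ℕ => √n / n) atTop (𝓝 0) := by
    simp_rw [Real.sqrt_div_self', one_div]
    exact tendsto_inv_atTop_zero.comp (Real.tendsto_sqrt_atTop.comp tendsto_natCast_atTop_atTop)
  have hpow : Tendsto (fun n : ℕ => √n * ρ ^ n) atTop (𝓝 0) :=
    squeeze_zero (fun n => by positivity)
      (fun n => mul_le_mul_of_nonneg_right (Real.sqrt_le_self_iff.2 (by
        rcases n with _ | n <;> simp)) (pow_nonneg hρ0 n))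
      (tendsto_self_mul_const_pow_of_lt_one hρ0 hρ1)
  have := (hdiv.const_mul A).add (hpow.const_mul B)
  rw [mul_zero, mul_zero, add_zero] at this
  exact this.congr fun n => by ring

theorem eventually_abs_gEst_sub_gLim_le {w : ℕ → ℝ} {M c d : ℝ}
    (hw : ∀ v, 1 ≤ v → |w v| ≤ M) (hc : 0 < c) (hd : d < 1) :
    ∀ᶠ n : ℕ in atTop, ∀ p ∈ Set.Icc c d,
      |gEst w n p - gLim w p| ≤ 32 * M / c ^ 3 / n + M * ((1 - c) ^ (1 - d)) ^ n := by
  have hM : 0 ≤ M := (abs_nonneg _).trans (hw 1 le_rfl)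
  filter_upwards [tendsto_natCast_atTop_atTop.eventually_ge_atTop (4 / c ^ 2)]
    with n hn p ⟨hcp, hpd⟩
  have hp0 : 0 < p := hc.trans_le hcp
  have hn0 : 0 < (n : ℝ) := (by positivity : 0 < 4 / c ^ 2).trans_le hn
  have hnp : 4 ≤ n * p ^ 2 := by
    rw [div_le_iff₀ (by positivity)] at hn
    nlinarith [mul_le_mul_of_nonneg_left (pow_le_pow_left₀ hc.le hcp 2) hn0.le]
  have hN : (n : ℝ) * (1 - d) ≤ ⌊(n : ℝ) * (1 - p) + 1⌋₊ + 1 := by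
    have := Nat.lt_floor_add_one ((n : ℝ) * (1 - p) + 1)
    nlinarith [(Nat.cast_nonneg n : (0 : ℝ) ≤ n)]
  refine (abs_gEst_sub_gLim_le hw hp0 (by linarith) hnp).trans (add_le_add ?_ ?_)
  · rw [div_div, mul_comm (c ^ 3)]
    gcongr
  · gcongr M * ?_
    calc (1 - p) ^ (⌊(n : ℝ) * (1 - p) + 1⌋₊ + 1)
        ≤ (1 - c) ^ (⌊(n : ℝ) * (1 - p) + 1⌋₊ + 1) := by gcongr; linarith
      _ ≤ ((1 - c) ^ (1 - d)) ^ n := pow_le_rpow_pow_of_mul_le (by linarith) (by linarith)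
          (by exact_mod_cast hN)

theorem sqrt_n_sup_dist_gEst_gLim_tendsto_zero_general
    (w : ℕ → ℝ) (M : ℝ) (hw : ∀ v, 1 ≤ v → |w v| ≤ M)
    (c d : ℝ) (hc : 0 < c) (hcd : c < d) (hd : d < 1) :
    Tendsto
      (fun n : ℕ => ⨆ p : Set.Icc c d, Real.sqrt n * |gEst w n p - gLim w p|)
      atTop (𝓝 0) := by
  have hc1 : c < 1 := hcd.trans hd
  have hρ : (1 - c) ^ (1 - d) < 1 := Real.rpow_lt_one (by linarith) (by linarith) (by linarith)
  have : Nonempty (Set.Icc c d) := (Set.nonempty_Icc.2 hcd.le).to_subtype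
  refine squeeze_zero' (Eventually.of_forall fun n => Real.iSup_nonneg fun p => by positivity) ?_
    (tendsto_sqrt_mul_div_add_mul_pow (32 * M / c ^ 3) M
      (Real.rpow_nonneg (by linarith) _) hρ)
  filter_upwards [eventually_abs_gEst_sub_gLim_le hw hc hd] with n hn
  exact ciSup_le fun p => mul_le_mul_of_nonneg_left (hn p p.2) (Real.sqrt_nonneg _)

/-- for bounded weights and any `0 < c < d < 1`,
`lim_{n→∞} sup_{p∈[c,d]} √n |g_n(p) - g(p)| = 0`. -/
theorem sqrt_n_sup_dist_gEst_gLim_tendsto_zero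
    (w : ℕ → ℝ) (M : ℝ) (hM : 0 < M) (hw : ∀ v, 1 ≤ v → |w v| ≤ M)
    (c d : ℝ) (hc : 0 < c) (hcd : c < d) (hd : d < 1) :
    Tendsto
      (fun n : ℕ => ⨆ p : Set.Icc c d, Real.sqrt n * |gEst w n p - gLim w p|)
      atTop (𝓝 0) :=
  sqrt_n_sup_dist_gEst_gLim_tendsto_zero_general w M hw c d hc hcd hd
end

section
/- Let n ∈ ℕ and p ∈ (0,1) with np ≥ 1, and let v be a positive integer with v ≤ n(1-p) + 1 and v < n. Then |Π_{j=1}^v (1 - (np - 1)/(n - j)) - (1-p)^v| ≤ (1-p)^{v-1} v² / (n - v). -/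
/-!
With `q = 1 - p`, each factor is `aⱼ = (nq - j + 1)/(n - j)`, so `0 ≤ aⱼ ≤ q (n - j + 1)/(n - j)`
and `aⱼ - q = (1 - jp)/(n - j)` has size at most `j/(n - j)`. Induct on `v` with the telescoping
identity `∏_{j ≤ v+1} aⱼ - qᵛ⁺¹ = a_{v+1} (∏_{j ≤ v} aⱼ - qᵛ) + qᵛ (a_{v+1} - q)`: the factor
`n - v` of the old bound cancels against the bound on `a_{v+1}`, and the error grows from
`qᵛ⁻¹ v²/(n - v)` to `qᵛ (v² + v + 1)/(n - v - 1) ≤ qᵛ (v + 1)²/(n - v - 1)`.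
-/

open Finset

theorem abs_prod_Icc_sub_pow_le {a : ℕ → ℝ} {q m : ℝ} {v : ℕ} (hq : 0 ≤ q) (hvm : (v : ℝ) < m)
    (ha_nonneg : ∀ j ∈ Icc 1 v, 0 ≤ a j)
    (ha_le : ∀ j ∈ Icc 1 v, a j ≤ q * (m - j + 1) / (m - j))
    (ha_sub : ∀ j ∈ Icc 1 v, |a j - q| ≤ j / (m - j)) :
    |∏ j ∈ Icc 1 v, a j - q ^ v| ≤ q ^ (v - 1) * (v : ℝ) ^ 2 / (m - v) := by
  induction v with
  | zero => simp
  | succ v ih =>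
    have hsub : Icc 1 v ⊆ Icc 1 (v + 1) := Icc_subset_Icc_right v.le_succ
    have hlast : v + 1 ∈ Icc 1 (v + 1) := by simp
    push_cast at hvm ⊢
    have hd : 0 < m - (v + 1) := by linarith
    have IH := ih (by linarith) (fun j hj ↦ ha_nonneg j (hsub hj))
      (fun j hj ↦ ha_le j (hsub hj)) (fun j hj ↦ ha_sub j (hsub hj))
    have hx0 := ha_nonneg _ hlast
    have hxle := ha_le _ hlast
    have hxsub := ha_sub _ hlast
    push_cast at hxle hxsub
    rw [show m - (v + 1) + 1 = m - v by ring] at hxle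
    -- `v - 1` truncates at `v = 0`, where the factor `v²` vanishes.
    have hpow : q * q ^ (v - 1) * (v : ℝ) ^ 2 = q ^ v * (v : ℝ) ^ 2 := by
      rcases v with _ | v <;> simp [pow_succ']
    rw [prod_Icc_succ_top (by omega),
      show (∏ j ∈ Icc 1 v, a j) * a (v + 1) - q ^ (v + 1)
        = a (v + 1) * (∏ j ∈ Icc 1 v, a j - q ^ v) + q ^ v * (a (v + 1) - q) by ring]
    calc _ ≤ a (v + 1) * |∏ j ∈ Icc 1 v, a j - q ^ v| + q ^ v * |a (v + 1) - q| := by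
          refine (abs_add_le _ _).trans_eq ?_
          rw [abs_mul, abs_mul, abs_of_nonneg hx0, abs_of_nonneg (pow_nonneg hq v)]
      _ ≤ q * (m - v) / (m - (v + 1)) * (q ^ (v - 1) * (v : ℝ) ^ 2 / (m - v))
          + q ^ v * ((v + 1) / (m - (v + 1))) := by
          gcongr
          exact hx0.trans hxle
      _ = q ^ v * ((v : ℝ) ^ 2 + v + 1) / (m - (v + 1)) := by
          have hmv : m - v ≠ 0 := by linarith
          field_simp
          linear_combination hpow
      _ ≤ q ^ v * ((v : ℝ) + 1) ^ 2 / (m - (v + 1)) := by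
          gcongr
          nlinarith [(v.cast_nonneg : (0 : ℝ) ≤ v)]

section Factors

variable {n p x : ℝ}

theorem one_sub_div_eq (hxn : x < n) :
    1 - (n * p - 1) / (n - x) = (n * (1 - p) - x + 1) / (n - x) := by
  field_simp [(sub_pos.mpr hxn).ne']
  ring

theorem one_sub_div_nonneg (hxn : x < n) (hx : x ≤ n * (1 - p) + 1) :
    0 ≤ 1 - (n * p - 1) / (n - x) := by
  rw [one_sub_div_eq hxn]
  exact div_nonneg (by linarith) (by linarith)

theorem one_sub_div_le (hxn : x < n) (hp : 0 ≤ p) (hx : 1 ≤ x) :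
    1 - (n * p - 1) / (n - x) ≤ (1 - p) * (n - x + 1) / (n - x) := by
  rw [one_sub_div_eq hxn]
  gcongr ?_ / _
  nlinarith

theorem abs_one_sub_div_sub_le (hxn : x < n) (hp : p ∈ Set.Icc (0 : ℝ) 1) (hx : 1 ≤ x) :
    |1 - (n * p - 1) / (n - x) - (1 - p)| ≤ x / (n - x) := by
  have hd : 0 < n - x := sub_pos.mpr hxn
  rw [one_sub_div_eq hxn, show (n * (1 - p) - x + 1) / (n - x) - (1 - p)
      = (1 - x * p) / (n - x) by field_simp; ring, abs_div, abs_of_pos hd]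
  gcongr
  obtain ⟨hp0, hp1⟩ := hp
  rw [abs_le]
  constructor <;> nlinarith

end Factors

theorem abs_prod_sub_pow_le_general
    (n : ℕ) (p : ℝ) (hp : p ∈ Set.Ioo (0 : ℝ) 1)
    (v : ℕ) (hvle : (v : ℝ) ≤ (n : ℝ) * (1 - p) + 1) (hvn : v < n) :
    |(∏ j ∈ Finset.Icc 1 v, (1 - ((n : ℝ) * p - 1) / ((n : ℝ) - (j : ℝ)))) -
        (1 - p) ^ v| ≤
      (1 - p) ^ (v - 1) * (v : ℝ) ^ 2 / ((n : ℝ) - (v : ℝ)) := by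
  have hvn' : (v : ℝ) < n := by exact_mod_cast hvn
  have hj : ∀ j ∈ Icc 1 v, (1 : ℝ) ≤ j ∧ (j : ℝ) ≤ v := fun j hj ↦ by
    obtain ⟨h1, h2⟩ := mem_Icc.mp hj
    exact ⟨by exact_mod_cast h1, by exact_mod_cast h2⟩
  refine abs_prod_Icc_sub_pow_le (by linarith [hp.2]) hvn' (fun j hj' ↦ ?_) (fun j hj' ↦ ?_)
    (fun j hj' ↦ ?_) <;> obtain ⟨h1, h2⟩ := hj j hj'
  · exact one_sub_div_nonneg (by linarith) (by linarith)
  · exact one_sub_div_le (by linarith) hp.1.le h1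
  · exact abs_one_sub_div_sub_le (by linarith) (Set.Ioo_subset_Icc_self hp) h1

/-- for `n ∈ ℕ`, `p ∈ (0,1)` with `np ≥ 1`, and a positive integer `v`
with `v ≤ n(1-p)+1` and `v < n`,
`|∏_{j=1}^v (1 - (np-1)/(n-j)) - (1-p)^v| ≤ (1-p)^{v-1} v² / (n-v)`. -/
theorem abs_prod_sub_pow_le
    (n : ℕ) (p : ℝ) (hp : p ∈ Set.Ioo (0 : ℝ) 1) (hnp : 1 ≤ (n : ℝ) * p)
    (v : ℕ) (hv1 : 1 ≤ v) (hvle : (v : ℝ) ≤ (n : ℝ) * (1 - p) + 1) (hvn : v < n) :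
    |(∏ j ∈ Finset.Icc 1 v, (1 - ((n : ℝ) * p - 1) / ((n : ℝ) - (j : ℝ)))) -
        (1 - p) ^ v| ≤
      (1 - p) ^ (v - 1) * (v : ℝ) ^ 2 / ((n : ℝ) - (v : ℝ)) :=
  abs_prod_sub_pow_le_general n p hp v hvle hvn
end
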